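/- Let x be a solution of (VM-DIN-AVD) and define U(t) = (ε(t)/2)‖ẋ(t)‖² + f(x(t)) − f(x*), where x* is the unique minimizer of f. Then U is differentiable, and for every t > 0 its derivative equals U'(t) = (ε'(t)/2)‖ẋ(t)‖² − α(t)‖ẋ(t)‖² − β⟨∇²f(x(t))ẋ(t), ẋ(t)⟩ ≤ 0; in particular U is non-increasing. -/

import Mathlib

/-! Along a solution, `U' = (ε'/2) ‖ẋ‖² + ε ⟪ẍ, ẋ⟫ + ⟪∇f(x), ẋ⟫`, and pairing the equation with `ẋ`
replaces `ε ⟪ẍ, ẋ⟫ + ⟪∇f(x), ẋ⟫` by `-α ‖ẋ‖² - β ⟪∇²f(x) ẋ, ẋ⟫`. Each remaining term is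
nonpositive: `ε` is non-increasing, `α ≥ 0`, `β > 0`, and the Hessian of a convex function is
positive semidefinite. Monotonicity of `U` then follows from the mean value theorem. -/

open Real Filter MeasureTheory Set

noncomputable def hessApp {n : ℕ} (f : EuclideanSpace ℝ (Fin n) → ℝ)
    (x v : EuclideanSpace ℝ (Fin n)) : EuclideanSpace ℝ (Fin n) :=
  fderiv ℝ (gradient f) x v

def StandingF {n : ℕ} (f : EuclideanSpace ℝ (Fin n) → ℝ) : Prop :=
  ConvexOn ℝ Set.univ f ∧ ContDiff ℝ 2 f ∧
    Filter.Tendsto f (Filter.cocompact _) Filter.atTop ∧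
    ∀ s : Set (EuclideanSpace ℝ (Fin n)), Bornology.IsBounded s →
      ∃ μ > 0, StrongConvexOn s μ f

def AdmissibleEps (ε : ℝ → ℝ) : Prop :=
  AntitoneOn ε (Set.Ici 0) ∧ (∀ t ∈ Set.Ici (0:ℝ), 0 < ε t) ∧
    Differentiable ℝ ε ∧ Differentiable ℝ (deriv ε) ∧
    ∃ M, ∀ t ∈ Set.Ici (0:ℝ), |deriv (deriv ε) t| ≤ M

def AdmissibleAlpha (α : ℝ → ℝ) : Prop :=
  AntitoneOn α (Set.Ici 0) ∧ (∀ t ∈ Set.Ici (0:ℝ), 0 ≤ α t) ∧ Differentiable ℝ α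

def IsSolVM {n : ℕ} (f : EuclideanSpace ℝ (Fin n) → ℝ) (β : ℝ) (ε α : ℝ → ℝ)
    (x : ℝ → EuclideanSpace ℝ (Fin n)) (x0 v0 : EuclideanSpace ℝ (Fin n)) : Prop :=
  ContDiff ℝ 2 x ∧ x 0 = x0 ∧ deriv x 0 = v0 ∧
    ∀ t ∈ Set.Ici (0:ℝ),
      ε t • deriv (deriv x) t + α t • deriv x t
        + β • hessApp f (x t) (deriv x t) + gradient f (x t) = 0

def IsSolCN {n : ℕ} (f : EuclideanSpace ℝ (Fin n) → ℝ) (β : ℝ)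
    (x : ℝ → EuclideanSpace ℝ (Fin n)) (x0 : EuclideanSpace ℝ (Fin n)) : Prop :=
  ContDiff ℝ 1 x ∧ x 0 = x0 ∧
    ∀ t ∈ Set.Ici (0:ℝ), β • hessApp f (x t) (deriv x t) + gradient f (x t) = 0

def IsSolLM {n : ℕ} (f : EuclideanSpace ℝ (Fin n) → ℝ) (β : ℝ) (α : ℝ → ℝ)
    (x : ℝ → EuclideanSpace ℝ (Fin n)) (x0 : EuclideanSpace ℝ (Fin n)) : Prop :=
  ContDiff ℝ 1 x ∧ x 0 = x0 ∧
    ∀ t ∈ Set.Ici (0:ℝ),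
      α t • deriv x t + β • hessApp f (x t) (deriv x t) + gradient f (x t) = 0

open scoped InnerProductSpace

section Gradient

variable {F : Type*} [NormedAddCommGroup F] [InnerProductSpace ℝ F] [CompleteSpace F]
  {f : F → ℝ}

theorem ContDiff.differentiable_gradient {k : WithTop ℕ∞} (hf : ContDiff ℝ k f) (hk : 2 ≤ k) :
    Differentiable ℝ (gradient f) :=
  (InnerProductSpace.toDual ℝ F).symm.toContinuousLinearEquiv.differentiable.comp
    ((hf.fderiv_right (m := 1) hk).differentiable one_ne_zero)

theorem HasGradientAt.comp_hasDerivAt {c : ℝ → F} {g c' : F} {t : ℝ}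
    (hf : HasGradientAt f g (c t)) (hc : HasDerivAt c c' t) :
    HasDerivAt (fun s => f (c s)) ⟪g, c'⟫_ℝ t :=
  hf.hasFDerivAt.comp_hasDerivAt t hc

/-- Along the line `s ↦ p + s • v` the slope `s ↦ ⟪∇f (p + s • v), v⟫` is the derivative of a
convex function, hence monotone, and its derivative at `0` is the Hessian form at `p`. -/
theorem ConvexOn.inner_fderiv_gradient_self_nonneg (hconv : ConvexOn ℝ univ f)
    (hf : Differentiable ℝ f) {p : F} (hg : DifferentiableAt ℝ (gradient f) p) (v : F) :
    0 ≤ ⟪fderiv ℝ (gradient f) p v, v⟫_ℝ := by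
  set c := AffineMap.lineMap (k := ℝ) p (p + v)
  have hc : ∀ s, HasDerivAt c v s := fun s => by
    simpa using AffineMap.hasDerivAt_lineMap (a := p) (b := p + v) (x := s)
  have hslope : ∀ s, HasDerivAt (fun s => f (c s)) ⟪gradient f (c s), v⟫_ℝ s := fun s =>
    (hf (c s)).hasGradientAt.comp_hasDerivAt (hc s)
  have hmono : Monotone fun s => ⟪gradient f (c s), v⟫_ℝ := by
    have h := (hconv.comp_affineMap c).monotoneOn_deriv fun s _ => (hslope s).differentiableAt
    rw [preimage_univ, monotoneOn_univ] at h
    convert h using 1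
    exact funext fun s => (hslope s).deriv.symm
  have hc0 : c 0 = p := AffineMap.lineMap_apply_zero _ _
  have hslope' : HasDerivAt (fun s => ⟪gradient f (c s), v⟫_ℝ)
      ⟪fderiv ℝ (gradient f) p v, v⟫_ℝ 0 := by
    have h := (hc0 ▸ hg).hasFDerivAt.comp_hasDerivAt 0 (hc 0)
    simpa [hc0] using h.inner ℝ (hasDerivAt_const 0 v)
  exact hslope'.nonneg_of_monotone hmono

theorem hasDerivAt_half_mul_norm_sq_add_comp {ε : ℝ → ℝ} {x v : ℝ → F} {t ε' : ℝ} {a : F}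
    (hε : HasDerivAt ε ε' t) (hx : HasDerivAt x (v t) t) (hv : HasDerivAt v a t)
    (hf : DifferentiableAt ℝ f (x t)) :
    HasDerivAt (fun s => ε s / 2 * ‖v s‖ ^ 2 + f (x s))
      (ε' / 2 * ‖v t‖ ^ 2 + ε t * ⟪v t, a⟫_ℝ + ⟪gradient f (x t), v t⟫_ℝ) t := by
  refine (((hε.div_const 2).mul hv.norm_sq).add
    (hf.hasGradientAt.comp_hasDerivAt hx)).congr_deriv ?_
  ring

end Gradient

theorem IsSolVM.hasDerivAt_energy {n : ℕ} {f : EuclideanSpace ℝ (Fin n) → ℝ} {β : ℝ}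
    {ε α : ℝ → ℝ} {x : ℝ → EuclideanSpace ℝ (Fin n)} {x0 v0 : EuclideanSpace ℝ (Fin n)}
    (hsol : IsSolVM f β ε α x x0 v0) (hf : Differentiable ℝ f) {t : ℝ}
    (hε : DifferentiableAt ℝ ε t) (ht : 0 ≤ t) :
    HasDerivAt (fun s => ε s / 2 * ‖deriv x s‖ ^ 2 + f (x s))
      (deriv ε t / 2 * ‖deriv x t‖ ^ 2 - α t * ‖deriv x t‖ ^ 2
        - β * ⟪hessApp f (x t) (deriv x t), deriv x t⟫_ℝ) t := by
  obtain ⟨hx, -, -, hode⟩ := hsol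
  have hx' : ContDiff ℝ 1 (deriv x) :=
    (contDiff_succ_iff_deriv.mp (show ContDiff ℝ (1 + 1) x from hx)).2.2
  refine (hasDerivAt_half_mul_norm_sq_add_comp hε.hasDerivAt
    (hx.differentiable (by norm_num) t).hasDerivAt (hx'.differentiable one_ne_zero t).hasDerivAt
    (hf _)).congr_deriv ?_
  have h := congrArg (⟪·, deriv x t⟫_ℝ) (hode t ht)
  simp only [inner_add_left, real_inner_smul_left, inner_zero_left,
    real_inner_self_eq_norm_sq] at h
  rw [real_inner_comm]
  linear_combination h

theorem stmt2_general {n : ℕ} (f : EuclideanSpace ℝ (Fin n) → ℝ) (β : ℝ) (hβ : 0 < β)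
    (hf : StandingF f) (ε α : ℝ → ℝ) (hε : AdmissibleEps ε) (hα : AdmissibleAlpha α)
    (x0 v0 : EuclideanSpace ℝ (Fin n)) (x : ℝ → EuclideanSpace ℝ (Fin n))
    (hsol : IsSolVM f β ε α x x0 v0)
    (xstar : EuclideanSpace ℝ (Fin n))
    (U : ℝ → ℝ)
    (hU : ∀ t, U t = ε t / 2 * ‖deriv x t‖ ^ 2 + f (x t) - f xstar) :
    (∀ t > (0:ℝ),
      HasDerivAt U
        (deriv ε t / 2 * ‖deriv x t‖ ^ 2 - α t * ‖deriv x t‖ ^ 2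
          - β * (inner ℝ (hessApp f (x t) (deriv x t)) (deriv x t) : ℝ)) t ∧
      deriv ε t / 2 * ‖deriv x t‖ ^ 2 - α t * ‖deriv x t‖ ^ 2
          - β * (inner ℝ (hessApp f (x t) (deriv x t)) (deriv x t) : ℝ) ≤ 0) ∧
    AntitoneOn U (Set.Ici 0) := by
  obtain ⟨hconv, hf2, -, -⟩ := hf
  obtain ⟨hεanti, -, hεdiff, -, -⟩ := hε
  obtain ⟨-, hαnonneg, -⟩ := hα
  have hfd : Differentiable ℝ f := hf2.differentiable (by norm_num)
  set U' : ℝ → ℝ := fun t => deriv ε t / 2 * ‖deriv x t‖ ^ 2 - α t * ‖deriv x t‖ ^ 2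
    - β * ⟪hessApp f (x t) (deriv x t), deriv x t⟫_ℝ
  have hU' : ∀ t ≥ 0, HasDerivAt U (U' t) t := fun t ht => by
    rw [funext hU]
    exact (hsol.hasDerivAt_energy hfd (hεdiff t) ht).sub_const (f xstar)
  have hU'_nonpos : ∀ t > 0, U' t ≤ 0 := fun t ht => by
    have hε' : deriv ε t ≤ 0 := by
      rw [← derivWithin_of_isOpen isOpen_Ioi ht]
      exact (hεanti.mono Ioi_subset_Ici_self).derivWithin_nonpos
    have hhess : 0 ≤ ⟪hessApp f (x t) (deriv x t), deriv x t⟫_ℝ :=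
      hconv.inner_fderiv_gradient_self_nonneg hfd (hf2.differentiable_gradient le_rfl _) _
    have hkin := mul_nonpos_of_nonpos_of_nonneg
      (div_nonpos_of_nonpos_of_nonneg hε' zero_le_two) (sq_nonneg ‖deriv x t‖)
    have hdamp := mul_nonneg (hαnonneg t ht.le) (sq_nonneg ‖deriv x t‖)
    have hvisc := mul_nonneg hβ.le hhess
    simp only [U']
    linarith
  refine ⟨fun t ht => ⟨hU' t ht.le, hU'_nonpos t ht⟩, ?_⟩
  refine antitoneOn_of_hasDerivWithinAt_nonpos (f' := U') (convex_Ici 0)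
    (fun t ht => (hU' t ht).continuousAt.continuousWithinAt) ?_ ?_ <;> rw [interior_Ici]
  · exact fun t ht => (hU' t (le_of_lt ht)).hasDerivWithinAt
  · exact hU'_nonpos

theorem stmt2 {n : ℕ} (f : EuclideanSpace ℝ (Fin n) → ℝ) (β : ℝ) (hβ : 0 < β)
    (hf : StandingF f) (ε α : ℝ → ℝ) (hε : AdmissibleEps ε) (hα : AdmissibleAlpha α)
    (x0 v0 : EuclideanSpace ℝ (Fin n)) (x : ℝ → EuclideanSpace ℝ (Fin n))
    (hsol : IsSolVM f β ε α x x0 v0)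
    (xstar : EuclideanSpace ℝ (Fin n)) (hmin : ∀ z, f xstar ≤ f z)
    (U : ℝ → ℝ)
    (hU : ∀ t, U t = ε t / 2 * ‖deriv x t‖ ^ 2 + f (x t) - f xstar) :
    (∀ t > (0:ℝ),
      HasDerivAt U
        (deriv ε t / 2 * ‖deriv x t‖ ^ 2 - α t * ‖deriv x t‖ ^ 2
          - β * (inner ℝ (hessApp f (x t) (deriv x t)) (deriv x t) : ℝ)) t ∧
      deriv ε t / 2 * ‖deriv x t‖ ^ 2 - α t * ‖deriv x t‖ ^ 2
          - β * (inner ℝ (hessApp f (x t) (deriv x t)) (deriv x t) : ℝ) ≤ 0) ∧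
    AntitoneOn U (Set.Ici 0) :=
  stmt2_general f β hβ hf ε α hε hα x0 v0 x hsol xstar U hU
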